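/- arXiv:1108.3055 — 4 statements merged into one kernel-verified Lean document; each statement's English description precedes it below -/
import Mathlib

section
/- Let R_1, R_2, …, R_n be normal subgroups of a group G. Then the fat commutator subgroup [[R_1, R_2, …, R_n]] equals the symmetric commutator subgroup [R_1, R_2, …, R_n]_S. -/
/-- A bracket arrangement shape: a binary tree whose leaves are the argument positions. -/
inductive BracketTree : Type
  | leaf : BracketTree
  | node : BracketTree → BracketTree → BracketTree

namespace BracketTree

/-- The weight of a bracket arrangement: its number of leaves. -/
def weight : BracketTree → ℕ
  | leaf => 1
  | node l r => l.weight + r.weight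

theorem weight_pos (t : BracketTree) : 0 < t.weight := by
  induction t with
  | leaf => simp [weight]
  | node l r hl hr => simp [weight]; omega

/-- Evaluation of a bracket arrangement `β^t : G^t → G`, where the binary bracket is the
commutator `[a₁, a₂] = a₁⁻¹a₂⁻¹a₁a₂`. -/
def eval {G : Type*} [Group G] : (t : BracketTree) → (Fin t.weight → G) → G
  | leaf, g => g ⟨0, Nat.one_pos⟩
  | node l r, g =>
      let a := l.eval fun i => g (Fin.castAdd r.weight i)
      let b := r.eval fun i => g (Fin.natAdd l.weight i)
      a⁻¹ * b⁻¹ * a * b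

end BracketTree

/-- The fat commutator subgroup `[[R₁, …, Rₙ]]`: the subgroup generated by all values
`β^t(g_{i₁}, …, g_{i_t})` of bracket arrangements on elements `g_{i_s} ∈ R_{i_s}`, where the
indices `i₁, …, i_t` run over all of `{1, …, n}` (i.e. the index function is surjective). -/
def fatCommutator {G : Type*} [Group G] {n : ℕ} (R : Fin n → Subgroup G) : Subgroup G :=
  Subgroup.closure { x | ∃ (t : BracketTree) (idx : Fin t.weight → Fin n),
    Function.Surjective idx ∧ ∃ g : Fin t.weight → G,
      (∀ s, g s ∈ R (idx s)) ∧ x = t.eval g }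

/-- The left-normed iterated commutator subgroup `[[…[[H₁, H₂], H₃], …], H_m]` of a list of
subgroups; the empty list gives the trivial subgroup and a singleton gives the subgroup itself. -/
def iteratedCommutator {G : Type*} [Group G] : List (Subgroup G) → Subgroup G
  | [] => ⊥
  | H :: L => L.foldl (fun A B => ⁅A, B⁆) H

/-- The symmetric commutator subgroup `[R₁, …, Rₙ]_S`: the join over all permutations `σ` of the
left-normed iterated commutator subgroups `[[…[[R_{σ(1)}, R_{σ(2)}], …], R_{σ(n)}]`. -/
def symmetricCommutator {G : Type*} [Group G] {n : ℕ} (R : Fin n → Subgroup G) : Subgroup G :=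
  ⨆ σ : Equiv.Perm (Fin n), iteratedCommutator (List.ofFn fun i => R (σ i))

/-
`≤`: let `P(S)` (`symmetricCommutatorOn R S`) be the join of the left-normed commutators
`[R_{i₁}, …, R_{iₘ}]` over all index lists with set of entries `S`, repetitions allowed. The
Three Subgroups Lemma modulo `P(S ∪ T)`, applied inductively on the last entry of the second list,
gives `[P(S), P(T)] ≤ P(S ∪ T)`, so a bracket arrangement with index set `S` lies in `P(S)`.
Since `[A, B] ≤ A ∩ B` for normal subgroups, deleting repeated entries only enlarges a left-normed
commutator, hence `P({1, …, n})` is the symmetric commutator.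

`≥`: `[A, B] ≤ N` for a normal `N` iff `A` lies in the preimage of the centralizer of `B` in
`G ⧸ N`, which is normal again when `B` is. As `[[R₁, …, Rₙ]]` is normal (conjugation permutes
its generators), peeling off the last factor in this way reduces
`[R_{σ1}, …, R_{σn}] ≤ [[R₁, …, Rₙ]]` to left-normed brackets of elements, and these are bracket
arrangements.
-/

open scoped commutatorElement

namespace Subgroup

variable {G : Type*} [Group G]

def commutatorResidual (N B : Subgroup G) [N.Normal] : Subgroup G :=
  (centralizer (B.map (QuotientGroup.mk' N) : Set (G ⧸ N))).comap (QuotientGroup.mk' N)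

theorem mem_commutatorResidual {N B : Subgroup G} [N.Normal] {x : G} :
    x ∈ N.commutatorResidual B ↔ ∀ b ∈ B, ⁅x, b⁆ ∈ N := by
  simp only [commutatorResidual, mem_comap, mem_centralizer_iff, coe_map, Set.forall_mem_image,
    SetLike.mem_coe, QuotientGroup.mk'_apply, ← QuotientGroup.mk_mul]
  refine forall₂_congr fun b _ => ?_
  rw [eq_comm, QuotientGroup.eq_iff_div_mem, commutatorElement_def, div_eq_mul_inv, mul_inv_rev,
    ← mul_assoc]

theorem commutator_le_iff_le_commutatorResidual {A B N : Subgroup G} [N.Normal] :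
    ⁅A, B⁆ ≤ N ↔ A ≤ N.commutatorResidual B := by
  rw [commutator_le, SetLike.le_def]
  simp only [mem_commutatorResidual]

instance commutatorResidual_normal (N B : Subgroup G) [N.Normal] [hB : B.Normal] :
    (N.commutatorResidual B).Normal := by
  have := hB.map (QuotientGroup.mk' N) (QuotientGroup.mk'_surjective N)
  unfold commutatorResidual
  infer_instance

/-- The Three Subgroups Lemma modulo a normal subgroup. -/
theorem commutator_commutator_le_of_rotate {H₁ H₂ H₃ N : Subgroup G} [N.Normal]
    (h₁ : ⁅⁅H₂, H₃⁆, H₁⁆ ≤ N) (h₂ : ⁅⁅H₃, H₁⁆, H₂⁆ ≤ N) : ⁅⁅H₁, H₂⁆, H₃⁆ ≤ N := by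
  have hker : ∀ H : Subgroup G, H ≤ N ↔ H.map (QuotientGroup.mk' N) = ⊥ := fun H => by
    rw [map_eq_bot_iff, QuotientGroup.ker_mk']
  simp only [hker, map_commutator] at h₁ h₂ ⊢
  exact commutator_commutator_eq_bot_of_rotate h₁ h₂

end Subgroup

open Subgroup

section IteratedCommutator

variable {G : Type*} [Group G]

theorem iteratedCommutator_append_singleton {L : List (Subgroup G)} (hL : L ≠ [])
    (B : Subgroup G) : iteratedCommutator (L ++ [B]) = ⁅iteratedCommutator L, B⁆ := by
  obtain ⟨H, L, rfl⟩ := List.exists_cons_of_ne_nil hL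
  simp [iteratedCommutator, List.foldl_append]

theorem commutator_iteratedCommutator_le (L : List (Subgroup G)) (B : Subgroup G) :
    ⁅iteratedCommutator L, B⁆ ≤ iteratedCommutator (L ++ [B]) := by
  rcases eq_or_ne L [] with rfl | hL
  · simp [iteratedCommutator]
  · rw [iteratedCommutator_append_singleton hL]

theorem foldl_commutator_normal : ∀ (L : List (Subgroup G)) (A : Subgroup G), A.Normal →
    (∀ B ∈ L, B.Normal) → (L.foldl (fun A B => ⁅A, B⁆) A).Normal
  | [], _, hA, _ => hA
  | B :: L, A, hA, hL => by
    obtain ⟨hB, hL⟩ := List.forall_mem_cons.mp hL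
    exact foldl_commutator_normal L _ (commutator_normal A B (h₁ := hA) (h₂ := hB)) hL

theorem iteratedCommutator_normal {L : List (Subgroup G)} (hL : ∀ B ∈ L, B.Normal) :
    (iteratedCommutator L).Normal := by
  cases L with
  | nil => exact (inferInstance : (⊥ : Subgroup G).Normal)
  | cons H L =>
    obtain ⟨hH, hL⟩ := List.forall_mem_cons.mp hL
    exact foldl_commutator_normal L H hH hL

theorem foldl_commutator_mono (L : List (Subgroup G)) {A A' : Subgroup G} (h : A ≤ A') :
    L.foldl (fun A B => ⁅A, B⁆) A ≤ L.foldl (fun A B => ⁅A, B⁆) A' := by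
  induction L generalizing A A' with
  | nil => exact h
  | cons B L ih => exact ih (commutator_mono h le_rfl)

theorem foldl_commutator_le_of_sublist {L L' : List (Subgroup G)} (h : L'.Sublist L) :
    ∀ A : Subgroup G, A.Normal → (∀ B ∈ L, B.Normal) →
      L.foldl (fun A B => ⁅A, B⁆) A ≤ L'.foldl (fun A B => ⁅A, B⁆) A := by
  induction h with
  | slnil => exact fun A _ _ => le_rfl
  | @cons L' L B _ ih =>
    intro A hA hL
    obtain ⟨hB, hL⟩ := List.forall_mem_cons.mp hL
    have := hA
    exact (ih _ (commutator_normal A B (h₂ := hB)) hL).trans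
      (foldl_commutator_mono L' (commutator_le_left A B))
  | @cons_cons L' L B _ ih =>
    intro A hA hL
    obtain ⟨hB, hL⟩ := List.forall_mem_cons.mp hL
    exact ih _ (commutator_normal A B (h₁ := hA) (h₂ := hB)) hL

theorem iteratedCommutator_le_of_sublist {L L' : List (Subgroup G)} (h : L'.Sublist L)
    (hL' : L' ≠ []) (hL : ∀ B ∈ L, B.Normal) : iteratedCommutator L ≤ iteratedCommutator L' := by
  obtain ⟨C, L', rfl⟩ := List.exists_cons_of_ne_nil hL'
  rcases L with _ | ⟨H, L⟩
  · simp at h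
  rw [List.forall_mem_cons] at hL
  obtain ⟨hH, hL⟩ := hL
  cases h with
  | cons _ h =>
    have := hL C (h.subset List.mem_cons_self)
    calc iteratedCommutator (H :: L) ≤ (C :: L').foldl (fun A B => ⁅A, B⁆) H :=
          foldl_commutator_le_of_sublist h H hH hL
      _ ≤ iteratedCommutator (C :: L') := foldl_commutator_mono L' (commutator_le_right H C)
  | cons_cons _ h => exact foldl_commutator_le_of_sublist h C hH hL

end IteratedCommutator

theorem Fin.range_append {α : Type*} {m n : ℕ} (a : Fin m → α) (b : Fin n → α) :
    Set.range (Fin.append a b) = Set.range a ∪ Set.range b := by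
  refine Set.Subset.antisymm ?_ (Set.union_subset ?_ ?_)
  · rintro _ ⟨s, rfl⟩
    induction s using Fin.addCases <;> simp
  · rintro _ ⟨s, rfl⟩
    exact ⟨Fin.castAdd n s, Fin.append_left a b s⟩
  · rintro _ ⟨s, rfl⟩
    exact ⟨Fin.natAdd m s, Fin.append_right a b s⟩

namespace BracketTree

variable {G H : Type*} [Group G] [Group H]

theorem eval_node (l r : BracketTree) (g : Fin (node l r).weight → G) :
    (node l r).eval g = ⁅(l.eval fun i => g (Fin.castAdd r.weight i))⁻¹,
      (r.eval fun i => g (Fin.natAdd l.weight i))⁻¹⁆ := by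
  simp [eval, commutatorElement_def]

theorem map_eval (f : G →* H) (t : BracketTree) (g : Fin t.weight → G) :
    f (t.eval g) = t.eval (f ∘ g) := by
  induction t with
  | leaf => rfl
  | node l r ihl ihr =>
    rw [eval_node, eval_node, map_commutatorElement, map_inv, map_inv, ihl, ihr]
    rfl

end BracketTree

section BracketValues

variable {G : Type*} [Group G] {ι : Type*}

def bracketValues (R : ι → Subgroup G) (S : Set ι) : Set G :=
  {x | ∃ (t : BracketTree) (idx : Fin t.weight → ι), Set.range idx = S ∧
    ∃ g : Fin t.weight → G, (∀ s, g s ∈ R (idx s)) ∧ t.eval g = x}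

variable {R : ι → Subgroup G}

theorem mem_bracketValues_singleton {i : ι} {x : G} (hx : x ∈ R i) :
    x ∈ bracketValues R {i} :=
  ⟨.leaf, fun _ => i, Set.range_const (ι := Fin 1), fun _ => x, fun _ => hx, rfl⟩

theorem commutator_inv_inv_mem_bracketValues_union {S T : Set ι} {x y : G}
    (hx : x ∈ bracketValues R S) (hy : y ∈ bracketValues R T) :
    ⁅x⁻¹, y⁻¹⁆ ∈ bracketValues R (S ∪ T) := by
  obtain ⟨t, idx, rfl, g, hg, rfl⟩ := hx
  obtain ⟨u, idx', rfl, g', hg', rfl⟩ := hy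
  refine ⟨.node t u, Fin.append idx idx', Fin.range_append idx idx', Fin.append g g', ?_, ?_⟩
  · intro s
    induction s using Fin.addCases <;> simp [hg, hg']
  · exact (BracketTree.eval_node t u (Fin.append g g')).trans (by simp)

theorem conj_mem_bracketValues (hR : ∀ i, (R i).Normal) {S : Set ι} {x : G}
    (hx : x ∈ bracketValues R S) (c : G) : c * x * c⁻¹ ∈ bracketValues R S := by
  obtain ⟨t, idx, hidx, g, hg, rfl⟩ := hx
  exact ⟨t, idx, hidx, MulAut.conj c ∘ g, fun s => (hR _).conj_mem _ (hg s) c,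
    (BracketTree.map_eval (MulAut.conj c).toMonoidHom t g).symm⟩

theorem iteratedCommutator_le_of_bracketValues_subset
    (hR : ∀ i, (R i).Normal) (l : List ι) {N : Subgroup G} (hN : N.Normal)
    (h : bracketValues R {i | i ∈ l} ⊆ N) : iteratedCommutator (l.map R) ≤ N := by
  induction l using List.reverseRecOn generalizing N with
  | nil => exact bot_le
  | append_singleton l b ih =>
    rcases eq_or_ne l [] with rfl | hl
    · exact fun x hx => h (by simpa using mem_bracketValues_singleton (R := R) hx)
    have := hR b
    rw [List.map_append, List.map_singleton, iteratedCommutator_append_singleton (by simpa),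
      commutator_le_iff_le_commutatorResidual]
    refine ih inferInstance fun x hx => ?_
    rw [SetLike.mem_coe, ← inv_mem_iff, mem_commutatorResidual]
    intro y hy
    rw [← inv_inv y]
    refine h ?_
    convert commutator_inv_inv_mem_bracketValues_union hx
      (mem_bracketValues_singleton (inv_mem hy)) using 2
    ext
    simp [or_comm]

end BracketValues

section FatCommutator

variable {G : Type*} [Group G] {n : ℕ} {R : Fin n → Subgroup G}

theorem fatCommutator_eq_closure_bracketValues :
    fatCommutator R = closure (bracketValues R Set.univ) := by
  simp only [fatCommutator, bracketValues, Set.range_eq_univ, eq_comm]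

theorem fatCommutator_normal (hR : ∀ i, (R i).Normal) : (fatCommutator R).Normal := by
  have hconj : Group.conjugatesOfSet (bracketValues R Set.univ) = bracketValues R Set.univ := by
    refine Set.Subset.antisymm (fun x hx => ?_) Group.subset_conjugatesOfSet
    obtain ⟨y, hy, hyx⟩ := Group.mem_conjugatesOfSet_iff.mp hx
    obtain ⟨c, rfl⟩ := isConj_iff.mp hyx
    exact conj_mem_bracketValues hR hy c
  rw [fatCommutator_eq_closure_bracketValues, ← hconj]
  exact normalClosure_normal

end FatCommutator

section SymmetricCommutatorOn

variable {G : Type*} [Group G] {ι : Type*}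

def symmetricCommutatorOn (R : ι → Subgroup G) (S : Set ι) : Subgroup G :=
  ⨆ (l : List ι) (_ : {i | i ∈ l} = S), iteratedCommutator (l.map R)

variable {R : ι → Subgroup G}

theorem iteratedCommutator_le_symmetricCommutatorOn (l : List ι) :
    iteratedCommutator (l.map R) ≤ symmetricCommutatorOn R {i | i ∈ l} :=
  le_iSup₂_of_le l rfl le_rfl

theorem le_symmetricCommutatorOn_singleton (i : ι) : R i ≤ symmetricCommutatorOn R {i} :=
  le_iSup₂_of_le [i] (by simp) le_rfl

theorem symmetricCommutatorOn_normal (hR : ∀ i, (R i).Normal) (S : Set ι) :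
    (symmetricCommutatorOn R S).Normal := by
  have (l : List ι) : (iteratedCommutator (l.map R)).Normal :=
    iteratedCommutator_normal (by simpa using fun i _ => hR i)
  unfold symmetricCommutatorOn
  infer_instance

theorem commutator_symmetricCommutatorOn_le (hR : ∀ i, (R i).Normal) (S : Set ι) (b : ι) :
    ⁅symmetricCommutatorOn R S, R b⁆ ≤ symmetricCommutatorOn R (S ∪ {b}) := by
  have := symmetricCommutatorOn_normal hR (S ∪ {b})
  rw [commutator_le_iff_le_commutatorResidual]
  refine iSup₂_le fun l hl => ?_
  rw [← commutator_le_iff_le_commutatorResidual]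
  calc ⁅iteratedCommutator (l.map R), R b⁆ ≤ iteratedCommutator ((l ++ [b]).map R) := by
        simpa using commutator_iteratedCommutator_le (l.map R) (R b)
    _ ≤ symmetricCommutatorOn R (S ∪ {b}) := by
        convert iteratedCommutator_le_symmetricCommutatorOn (R := R) (l ++ [b])
        simp [← hl, Set.ext_iff, or_comm]

theorem commutator_iteratedCommutator_le_symmetricCommutatorOn (hR : ∀ i, (R i).Normal)
    (l₁ l₂ : List ι) : ⁅iteratedCommutator (l₁.map R), iteratedCommutator (l₂.map R)⁆ ≤
      symmetricCommutatorOn R {i | i ∈ l₁ ++ l₂} := by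
  induction l₂ using List.reverseRecOn generalizing l₁ with
  | nil => simp [iteratedCommutator]
  | append_singleton m b ih =>
    have := symmetricCommutatorOn_normal hR {i | i ∈ l₁ ++ (m ++ [b])}
    rcases eq_or_ne m [] with rfl | hm
    · rw [List.nil_append]
      calc ⁅iteratedCommutator (l₁.map R), iteratedCommutator ([b].map R)⁆
          ≤ iteratedCommutator ((l₁ ++ [b]).map R) := by
            rw [List.map_append]
            exact commutator_iteratedCommutator_le (l₁.map R) (R b)
        _ ≤ _ := iteratedCommutator_le_symmetricCommutatorOn _
    rw [List.map_append, List.map_singleton, iteratedCommutator_append_singleton (by simpa),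
      commutator_comm]
    apply commutator_commutator_le_of_rotate
    · calc ⁅⁅R b, iteratedCommutator (l₁.map R)⁆, iteratedCommutator (m.map R)⁆
          ≤ ⁅iteratedCommutator ((l₁ ++ [b]).map R), iteratedCommutator (m.map R)⁆ := by
            rw [commutator_comm (R b)]
            exact commutator_mono (by simpa using commutator_iteratedCommutator_le _ _) le_rfl
        _ ≤ symmetricCommutatorOn R {i | i ∈ l₁ ++ [b] ++ m} := ih _
        _ = symmetricCommutatorOn R {i | i ∈ l₁ ++ (m ++ [b])} := by
            congr 1
            ext
            simp only [Set.mem_ofPred_eq, List.mem_append, List.mem_singleton]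
            tauto
    · calc ⁅⁅iteratedCommutator (l₁.map R), iteratedCommutator (m.map R)⁆, R b⁆
          ≤ ⁅symmetricCommutatorOn R {i | i ∈ l₁ ++ m}, R b⁆ := commutator_mono (ih l₁) le_rfl
        _ ≤ symmetricCommutatorOn R ({i | i ∈ l₁ ++ m} ∪ {b}) :=
            commutator_symmetricCommutatorOn_le hR _ b
        _ = symmetricCommutatorOn R {i | i ∈ l₁ ++ (m ++ [b])} := by
            congr 1
            ext
            simp only [Set.mem_union, Set.mem_ofPred_eq, List.mem_append, List.mem_singleton,
              Set.mem_singleton_iff]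
            tauto

theorem commutator_symmetricCommutatorOn_le_union (hR : ∀ i, (R i).Normal) (S T : Set ι) :
    ⁅symmetricCommutatorOn R S, symmetricCommutatorOn R T⁆ ≤ symmetricCommutatorOn R (S ∪ T) := by
  have := symmetricCommutatorOn_normal hR (S ∪ T)
  rw [commutator_le_iff_le_commutatorResidual]
  refine iSup₂_le fun l₁ hl₁ => ?_
  rw [← commutator_le_iff_le_commutatorResidual, commutator_comm,
    commutator_le_iff_le_commutatorResidual]
  refine iSup₂_le fun l₂ hl₂ => ?_
  rw [← commutator_le_iff_le_commutatorResidual, commutator_comm, ← hl₁, ← hl₂]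
  convert commutator_iteratedCommutator_le_symmetricCommutatorOn hR l₁ l₂ using 2
  ext
  simp

theorem eval_mem_symmetricCommutatorOn (hR : ∀ i, (R i).Normal) (t : BracketTree)
    (idx : Fin t.weight → ι) (g : Fin t.weight → G) (hg : ∀ s, g s ∈ R (idx s)) :
    t.eval g ∈ symmetricCommutatorOn R (Set.range idx) := by
  induction t with
  | leaf =>
    have hrange : Set.range idx = {idx ⟨0, Nat.one_pos⟩} := Set.range_unique (ι := Fin 1)
    exact hrange ▸ le_symmetricCommutatorOn_singleton _ (hg _)
  | node l r ihl ihr =>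
    have hrange : Set.range idx = Set.range (fun i => idx (Fin.castAdd r.weight i)) ∪
        Set.range (fun i => idx (Fin.natAdd l.weight i)) :=
      (congrArg Set.range Fin.append_castAdd_natAdd).symm.trans (Fin.range_append _ _)
    rw [BracketTree.eval_node, hrange]
    exact commutator_symmetricCommutatorOn_le_union hR _ _ <| commutator_mem_commutator
      (inv_mem (ihl _ _ fun s => hg _)) (inv_mem (ihr _ _ fun s => hg _))

end SymmetricCommutatorOn

theorem List.exists_perm_ofFn_eq {n : ℕ} {l : List (Fin n)} (hl : l.Nodup) (hall : ∀ i, i ∈ l) :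
    ∃ σ : Equiv.Perm (Fin n), List.ofFn σ = l := by
  have hlen : l.length = n := by
    simpa using Fintype.card_congr (hl.getEquivOfForallMemList l hall)
  refine ⟨(finCongr hlen.symm).trans (hl.getEquivOfForallMemList l hall), ?_⟩
  exact List.ext_get (by simp [hlen]) fun i _ _ => by simp [List.Nodup.getEquivOfForallMemList]

section Main

variable {G : Type*} [Group G]

theorem symmetricCommutatorOn_univ_le {n : ℕ} {R : Fin n → Subgroup G}
    (hR : ∀ i, (R i).Normal) : symmetricCommutatorOn R Set.univ ≤ symmetricCommutator R := by
  refine iSup₂_le fun l hl => ?_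
  rcases eq_or_ne l [] with rfl | hne
  · exact bot_le
  obtain ⟨σ, hσ⟩ := List.exists_perm_ofFn_eq l.nodup_dedup
    fun i => List.mem_dedup.mpr (hl.symm ▸ Set.mem_univ i : i ∈ {i | i ∈ l})
  calc iteratedCommutator (l.map R) ≤ iteratedCommutator (l.dedup.map R) :=
        iteratedCommutator_le_of_sublist (l.dedup_sublist.map R) (by simpa using hne)
          (by simpa using fun i _ => hR i)
    _ = iteratedCommutator (List.ofFn fun i => R (σ i)) := by rw [← hσ, List.map_ofFn]; rfl
    _ ≤ symmetricCommutator R := le_iSup (fun σ : Equiv.Perm (Fin n) =>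
          iteratedCommutator (List.ofFn fun i => R (σ i))) σ

theorem fatCommutator_le_symmetricCommutator {n : ℕ} {R : Fin n → Subgroup G}
    (hR : ∀ i, (R i).Normal) : fatCommutator R ≤ symmetricCommutator R := by
  rw [fatCommutator_eq_closure_bracketValues, closure_le]
  rintro _ ⟨t, idx, hidx, g, hg, rfl⟩
  exact symmetricCommutatorOn_univ_le hR (hidx ▸ eval_mem_symmetricCommutatorOn hR t idx g hg)

theorem symmetricCommutator_le_fatCommutator {n : ℕ} {R : Fin n → Subgroup G}
    (hR : ∀ i, (R i).Normal) : symmetricCommutator R ≤ fatCommutator R := by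
  refine iSup_le fun σ => ?_
  rw [show (List.ofFn fun i => R (σ i)) = (List.ofFn σ).map R from List.map_ofFn.symm]
  refine iteratedCommutator_le_of_bracketValues_subset hR _ (fatCommutator_normal hR) ?_
  have hsupp : {i | i ∈ List.ofFn σ} = Set.univ := by
    ext i
    simpa using ⟨σ.symm i, σ.apply_symm_apply i⟩
  rw [hsupp, fatCommutator_eq_closure_bracketValues]
  exact subset_closure

end Main

/-- For normal subgroups `R₁, …, Rₙ` of a group `G`, the fat commutator subgroup
`[[R₁, …, Rₙ]]` equals the symmetric commutator subgroup `[R₁, …, Rₙ]_S`. -/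
theorem fatCommutator_eq_symmetricCommutator {G : Type*} [Group G] {n : ℕ}
    (R : Fin n → Subgroup G) (hR : ∀ i, (R i).Normal) :
    fatCommutator R = symmetricCommutator R :=
  le_antisymm (fatCommutator_le_symmetricCommutator hR) (symmetricCommutator_le_fatCommutator hR)
end

section
/- Let A, G_1, G_2 be groups and let φ_1 : A → G_1 and φ_2 : A → G_2 be injective group homomorphisms that are not surjective (φ_1(A) ≠ G_1 and φ_2(A) ≠ G_2). Let G = G_1 *_A G_2 be the free product with amalgamation (the pushout of φ_1 and φ_2 in the category of groups) and let ι : A → G be the canonical homomorphism. Then the center of G is contained in ι(Z(A)); that is, every central element g of G satisfies g = ι(a) for some element a in the center of A. -/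
universe u

/-- The two-element family of groups `{G₁, G₂}` indexed by `Bool`. -/
def amalgFam (G₁ G₂ : Type u) : Bool → Type u := fun b => match b with
  | true => G₁
  | false => G₂

instance amalgFamGroup (G₁ G₂ : Type u) [Group G₁] [Group G₂] :
    (b : Bool) → Group (amalgFam G₁ G₂ b) := fun b => match b with
  | true => ‹Group G₁›
  | false => ‹Group G₂›

/-- The family of homomorphisms `{φ₁ : A →* G₁, φ₂ : A →* G₂}` indexed by `Bool`. -/
def amalgHom {A G₁ G₂ : Type u} [Group A] [Group G₁] [Group G₂]
    (φ₁ : A →* G₁) (φ₂ : A →* G₂) : (b : Bool) → A →* amalgFam G₁ G₂ b := fun b => match b with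
  | true => φ₁
  | false => φ₂

/-!
A central element `g` of the pushout outside the image of the base group has a reduced form
`base h * g₁ ⋯ gₙ` with `n ≥ 1`, each letter `gₘ` lying in a factor `G iₘ` but outside the image
of `H`, and by the normal form theorem the index sequence `i₁ ⋯ iₙ` depends only on `g`.
Take a factor `k ≠ iₙ` and `x ∈ G k` outside the image of `H`. Then `g * x` has index sequence
`i₁ ⋯ iₙ k`, whereas `x * g` has index sequence `k i₁ ⋯ iₙ` if `k ≠ i₁` and one of length at most
`n` if `k = i₁`; either way `x * g ≠ g * x`. So the centre lies in the image of the injective base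
map, and the preimage of a central element under an injective map is central.
-/

open Function

theorem Subgroup.mem_center_of_injective {M N : Type*} [Group M] [Group N] {f : M →* N}
    (hf : Injective f) {a : M} (ha : f a ∈ Subgroup.center N) : a ∈ Subgroup.center M :=
  Subgroup.mem_center_iff.2 fun b => hf <| by
    simpa only [map_mul] using Subgroup.mem_center_iff.1 ha (f b)

namespace Monoid.PushoutI

variable {ι H : Type*} {G : ι → Type*} [Group H] [∀ i, Group (G i)] {φ : ∀ i, H →* G i}

theorem reduced_cons_iff {i : ι} {m : G i} {w : CoprodI.Word G} {hw : w.fstIdx ≠ some i}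
    {hm : m ≠ 1} : Reduced φ (.cons m w hw hm) ↔ m ∉ (φ i).range ∧ Reduced φ w :=
  List.forall_mem_cons

theorem NormalWord.reduced_toWord {d : NormalWord.Transversal φ} (w : NormalWord d) :
    Reduced φ w.toWord := by
  rintro ⟨i, g⟩ hmem hg
  have hd : g ∈ d.set i := w.normalized i g hmem
  -- `g * 1 = 1 * g` splits `g` in two ways along the complement `(φ i).range * d.set i`
  have := (d.compl i).1 (a₁ := (⟨g, hg⟩, ⟨1, d.one_mem i⟩)) (a₂ := (⟨1, one_mem _⟩, ⟨g, hd⟩))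
    (by simp)
  exact w.ne_one _ hmem (congrArg (fun p => (p.1 : G i)) this)

def HasReducedForm (g : PushoutI φ) (L : List ι) : Prop :=
  ∃ (h : H) (w : CoprodI.Word G), Reduced φ w ∧ w.toList.map Sigma.fst = L ∧
    g = base φ h * ofCoprodI w.prod

theorem exists_hasReducedForm (hφ : ∀ i, Injective (φ i)) (g : PushoutI φ) :
    ∃ L, HasReducedForm g L := by
  classical
  obtain ⟨d⟩ := NormalWord.transversal_nonempty φ hφ
  let w : NormalWord d := g • NormalWord.empty
  exact ⟨_, w.head, w.toWord, w.reduced_toWord, rfl, (by simp [w] : w.prod = g).symm⟩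

variable {g : PushoutI φ} {L : List ι} {k : ι}

theorem HasReducedForm.unique (hφ : ∀ i, Injective (φ i)) {L₁ L₂ : List ι}
    (h₁ : HasReducedForm g L₁) (h₂ : HasReducedForm g L₂) : L₁ = L₂ := by
  obtain ⟨d⟩ := NormalWord.transversal_nonempty φ hφ
  obtain ⟨a₁, v₁, hv₁, rfl, hg₁⟩ := h₁
  obtain ⟨a₂, v₂, hv₂, rfl, hg₂⟩ := h₂
  obtain ⟨w₁, hw₁, hL₁⟩ := hv₁.exists_normalWord_prod_eq d
  obtain ⟨w₂, hw₂, hL₂⟩ := hv₂.exists_normalWord_prod_eq d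
  have : a₁ • w₁ = a₂ • w₂ := NormalWord.prod_injective <| by
    rw [NormalWord.prod_base_smul, NormalWord.prod_base_smul, hw₁, hw₂, ← hg₁, hg₂]
  rw [← hL₁, ← hL₂]
  exact (congrArg (fun w : NormalWord d => w.toList.map Sigma.fst) this :)

theorem HasReducedForm.mem_range_base (hg : HasReducedForm g []) :
    g ∈ (base φ).range := by
  obtain ⟨h, w, -, hw, rfl⟩ := hg
  rw [List.map_eq_nil_iff] at hw
  exact ⟨h, by simp [CoprodI.Word.prod, hw]⟩

theorem HasReducedForm.of_mul {x : G k} (hg : HasReducedForm g L) (hx : x ∉ (φ k).range)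
    (hL : L.head? ≠ some k) :
    HasReducedForm (of k x * g) (k :: L) := by
  obtain ⟨h, w, hw, rfl, rfl⟩ := hg
  have hxh : x * φ k h ∉ (φ k).range := by
    rwa [Subgroup.mul_mem_cancel_right _ (MonoidHom.mem_range.2 ⟨h, rfl⟩)]
  refine ⟨1, .cons (x * φ k h) w (by rwa [CoprodI.Word.fstIdx, ← List.head?_map])
    (fun h1 => hxh (h1 ▸ one_mem _)), reduced_cons_iff.2 ⟨hxh, hw⟩, rfl, ?_⟩
  simp [← mul_assoc, ← of_apply_eq_base φ k]

theorem HasReducedForm.mul_of {x : G k} (hg : HasReducedForm g L) (hx : x ∉ (φ k).range)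
    (hL : L.getLast? ≠ some k) :
    HasReducedForm (g * of k x) (L ++ [k]) := by
  obtain ⟨h, w, hw, rfl, rfl⟩ := hg
  let w' : CoprodI.Word G :=
    { toList := w.toList ++ [⟨k, x⟩]
      ne_one := by
        simpa [or_imp, forall_and] using ⟨w.ne_one, fun h1 => hx (h1 ▸ one_mem _)⟩
      chain_ne := w.chain_ne.append (List.isChain_singleton _) <| by
        rintro a ha _ ⟨⟩ (hak : a.1 = k)
        exact hL (by rw [List.getLast?_map, ha, Option.map_some, hak]) }
  refine ⟨h, w', ?_, by simp [w'], ?_⟩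
  · exact List.forall_mem_append.2 ⟨hw, by simpa using hx⟩
  · simp [w', CoprodI.Word.prod, mul_assoc]

theorem HasReducedForm.of_mul_of_head (hg : HasReducedForm g (k :: L)) (x : G k) :
    HasReducedForm (of k x * g) (k :: L) ∨ HasReducedForm (of k x * g) L := by
  obtain ⟨h, w, hw, hL, rfl⟩ := hg
  cases w using CoprodI.Word.consRecOn with
  | empty => simp at hL
  | cons i m w hfst hm1 =>
    simp only [CoprodI.Word.cons_toList, List.map_cons, List.cons.injEq] at hL
    obtain ⟨rfl, rfl⟩ := hL
    obtain ⟨-, hw⟩ := reduced_cons_iff.1 hw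
    have hprod : of (φ := φ) i x * (base φ h * ofCoprodI (CoprodI.Word.cons m w hfst hm1).prod)
        = of i (x * φ i h * m) * ofCoprodI w.prod := by
      rw [map_mul, map_mul, of_apply_eq_base, CoprodI.Word.prod_cons, map_mul, ofCoprodI_of]
      simp only [mul_assoc]
    by_cases hr : x * φ i h * m ∈ (φ i).range
    · obtain ⟨a, ha⟩ := hr
      refine .inr ⟨a, w, hw, rfl, ?_⟩
      rw [hprod, ← ha, of_apply_eq_base]
    · refine .inl ⟨1, .cons (x * φ i h * m) w hfst (fun h1 => hr (h1 ▸ one_mem _)),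
        reduced_cons_iff.2 ⟨hr, hw⟩, rfl, ?_⟩
      rw [hprod, map_one, one_mul, CoprodI.Word.prod_cons, map_mul ofCoprodI, ofCoprodI_of]

theorem center_le_range_base [Nontrivial ι] (hφ : ∀ i, Injective (φ i))
    (hne : ∀ i, (φ i).range ≠ ⊤) : Subgroup.center (PushoutI φ) ≤ (base φ).range := by
  intro g hg
  by_contra hgH
  obtain ⟨L, hL⟩ := exists_hasReducedForm hφ g
  have hLne : L ≠ [] := by rintro rfl; exact hgH hL.mem_range_base
  obtain ⟨k, hk⟩ := exists_ne (L.getLast hLne)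
  obtain ⟨x, hx⟩ : ∃ x, x ∉ (φ k).range := by
    simpa [Subgroup.eq_top_iff'] using hne k
  have hgx : HasReducedForm (of k x * g) (L ++ [k]) := by
    rw [Subgroup.mem_center_iff.1 hg]
    exact hL.mul_of hx (by simpa [List.getLast?_eq_some_getLast hLne] using hk.symm)
  obtain ⟨i, t, rfl⟩ := List.exists_cons_of_ne_nil hLne
  by_cases hik : i = k
  · subst hik
    rcases hL.of_mul_of_head x with h | h <;>
    · have := congrArg List.length (h.unique hφ hgx)
      simp only [List.length_cons, List.length_append] at this
      omega
  · have := (hL.of_mul hx (by simpa using hik)).unique hφ hgx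
    exact hik (List.cons.inj this).1.symm

end Monoid.PushoutI

/-- If `φ₁ : A → G₁` and `φ₂ : A → G₂` are injective but not surjective group homomorphisms,
then the center of the amalgamated free product `G₁ *_A G₂` is contained in the image under the
canonical map `ι : A → G₁ *_A G₂` of the center of `A`. -/
theorem center_amalgamated_le_center_base {A G₁ G₂ : Type u}
    [Group A] [Group G₁] [Group G₂] (φ₁ : A →* G₁) (φ₂ : A →* G₂)
    (h₁inj : Function.Injective φ₁) (h₂inj : Function.Injective φ₂)
    (h₁ne : φ₁.range ≠ ⊤) (h₂ne : φ₂.range ≠ ⊤) :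
    ∀ g ∈ Subgroup.center (Monoid.PushoutI (amalgHom φ₁ φ₂)),
      ∃ a ∈ Subgroup.center A, Monoid.PushoutI.base (amalgHom φ₁ φ₂) a = g := by
  have hφ : ∀ b, Injective (amalgHom φ₁ φ₂ b) := Bool.forall_bool.2 ⟨h₂inj, h₁inj⟩
  have hne : ∀ b, (amalgHom φ₁ φ₂ b).range ≠ ⊤ := Bool.forall_bool.2 ⟨h₂ne, h₁ne⟩
  intro g hg
  obtain ⟨a, rfl⟩ := Monoid.PushoutI.center_le_range_base hφ hne hg
  exact ⟨a, Subgroup.mem_center_of_injective (Monoid.PushoutI.base_injective hφ) hg, rfl⟩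
end

section
/- Let f : G → G' be a homomorphism of simplicial groups (a morphism of simplicial objects in the category of groups). For each q define the Moore chain subgroup N_q G = ⋂_{i=1}^{q} ker(d_i : G_q → G_{q-1}) (with N_0 G = G_0). Then f_q : G_q → G'_q is surjective for all q if and only if f_q(N_q G) = N_q G' for all q. -/
open CategoryTheory

/-- The `q`-th Moore chain subgroup of a simplicial group `G`:
the intersection `⋂_{i=1}^{q} ker(dᵢ : G_q → G_{q-1})`, with `N_0 G = G_0`. -/
def MooreChains (G : SimplicialObject GrpCat) :
    (q : ℕ) → Subgroup (G.obj (Opposite.op (SimplexCategory.mk q)))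
  | 0 => ⊤
  | (q + 1) => ⨅ i : Fin (q + 1), MonoidHom.ker (G.δ i.succ).hom

/-!
If the faces `d_{i+1}` of `x ∈ G_{q+1}` vanish for all `i > j`, the simplicial identities show
that those of `x · (s_j d_{j+1} x)⁻¹` vanish for all `i ≥ j`. Correcting successively for
`j = q, …, 0` thus moves any element of `G_{q+1}` into `N_{q+1} G` by degenerate factors.
If `f` is surjective, lift `y ∈ N_{q+1} G'` to some `x` and correct it: `f` kills every correction
because the faces of `y` vanish. Conversely, the corrections of `y ∈ G'_{q+1}` are degeneracies
of elements of `G'_q`, hence lie in the image of `f` once `f_q` is surjective, so surjectivity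
propagates from level `q` to level `q + 1`.
-/

open Opposite Simplicial

namespace CategoryTheory.SimplicialObject

theorem exists_δ_comp_σ_comp_δ_eq_δ_comp {C : Type*} [Category C] (X : SimplicialObject C)
    {q : ℕ} {i j : Fin (q + 1)} (hji : j < i) :
    ∃ g, X.δ j.succ ≫ X.σ j ≫ X.δ i.succ = X.δ i.succ ≫ g := by
  obtain ⟨n, rfl⟩ : ∃ n, q = n + 1 := ⟨q - 1, by omega⟩
  obtain ⟨j, rfl⟩ := Fin.exists_castSucc_eq.2 (Fin.ne_last_of_lt hji)
  refine ⟨X.δ j.succ ≫ X.σ j, ?_⟩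
  rw [X.δ_comp_σ_of_gt hji, ← Fin.castSucc_succ,
    X.δ_comp_δ_assoc (Fin.castSucc_lt_iff_succ_le.1 hji)]

variable {G G' : SimplicialObject GrpCat} (f : G ⟶ G')

theorem app_δ_apply {q : ℕ} (i : Fin (q + 2)) (x : G _⦋q + 1⦌) :
    f.app (op ⦋q⦌) (G.δ i x) = G'.δ i (f.app (op ⦋q + 1⦌) x) := by
  rw [← ConcreteCategory.comp_apply, δ_naturality, ConcreteCategory.comp_apply]

theorem app_σ_apply {q : ℕ} (i : Fin (q + 1)) (x : G _⦋q⦌) :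
    f.app (op ⦋q + 1⦌) (G.σ i x) = G'.σ i (f.app (op ⦋q⦌) x) := by
  rw [← ConcreteCategory.comp_apply, σ_naturality, ConcreteCategory.comp_apply]

end CategoryTheory.SimplicialObject

def partialMooreChains (G : SimplicialObject GrpCat) (q m : ℕ) : Subgroup (G _⦋q + 1⦌) :=
  ⨅ (i : Fin (q + 1)) (_ : m ≤ (i : ℕ)), (G.δ i.succ).hom.ker

section

open SimplicialObject

variable {G G' : SimplicialObject GrpCat}

theorem mem_mooreChains_succ_iff {q : ℕ} {x : G _⦋q + 1⦌} :
    x ∈ MooreChains G (q + 1) ↔ ∀ i : Fin (q + 1), G.δ i.succ x = 1 := by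
  simp [MooreChains, Subgroup.mem_iInf, MonoidHom.mem_ker]

theorem mem_partialMooreChains_iff {q m : ℕ} {x : G _⦋q + 1⦌} :
    x ∈ partialMooreChains G q m ↔ ∀ i : Fin (q + 1), m ≤ (i : ℕ) → G.δ i.succ x = 1 := by
  simp [partialMooreChains, Subgroup.mem_iInf, MonoidHom.mem_ker]

theorem partialMooreChains_zero (q : ℕ) : partialMooreChains G q 0 = MooreChains G (q + 1) := by
  ext x
  simp [mem_partialMooreChains_iff, mem_mooreChains_succ_iff]

theorem partialMooreChains_self_add_one (q : ℕ) : partialMooreChains G q (q + 1) = ⊤ := by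
  ext x
  simp only [mem_partialMooreChains_iff, Subgroup.mem_top, iff_true]
  exact fun i hi => absurd i.isLt (by omega)

theorem mul_inv_σ_δ_mem_partialMooreChains {q : ℕ} {j : Fin (q + 1)} {x : G _⦋q + 1⦌}
    (hx : x ∈ partialMooreChains G q (j + 1)) :
    x * (G.σ j (G.δ j.succ x))⁻¹ ∈ partialMooreChains G q j := by
  rw [mem_partialMooreChains_iff] at hx ⊢
  intro i hji
  rw [map_mul, map_inv]
  obtain rfl | hji := (Fin.le_def.2 hji).eq_or_lt
  · rw [← ConcreteCategory.comp_apply, δ_comp_σ_succ, ConcreteCategory.id_apply, mul_inv_cancel]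
  · obtain ⟨g, hg⟩ := exists_δ_comp_σ_comp_δ_eq_δ_comp G hji
    have hσδ := ConcreteCategory.congr_hom hg x
    simp only [ConcreteCategory.comp_apply] at hσδ
    rw [hσδ, hx i hji, map_one, inv_one, mul_one]

variable (f : G ⟶ G')

theorem map_mooreChains_le (q : ℕ) :
    (MooreChains G q).map (f.app (op ⦋q⦌)).hom ≤ MooreChains G' q := by
  cases q with
  | zero => exact le_top
  | succ q =>
    rw [Subgroup.map_le_iff_le_comap]
    intro x hx
    rw [Subgroup.mem_comap, mem_mooreChains_succ_iff]
    intro i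
    rw [← app_δ_apply, mem_mooreChains_succ_iff.1 hx i, map_one]

theorem map_mooreChains_zero_eq_iff :
    (MooreChains G 0).map (f.app (op ⦋0⦌)).hom = MooreChains G' 0 ↔
      Function.Surjective (f.app (op ⦋0⦌)) := by
  change Subgroup.map _ ⊤ = ⊤ ↔ _
  rw [← MonoidHom.range_eq_map, MonoidHom.range_eq_top]

theorem map_partialMooreChains_inf_le {q m : ℕ} (hm : m ≤ q + 1) :
    (partialMooreChains G q m).map (f.app (op ⦋q + 1⦌)).hom ⊓ MooreChains G' (q + 1) ≤
      (MooreChains G (q + 1)).map (f.app (op ⦋q + 1⦌)).hom := by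
  induction m with
  | zero => rw [partialMooreChains_zero]; exact inf_le_left
  | succ m ih =>
    rintro _ ⟨⟨x, hx, rfl⟩, hfx⟩
    let j : Fin (q + 1) := ⟨m, hm⟩
    have hf_corr : f.app _ (x * (G.σ j (G.δ j.succ x))⁻¹) = f.app _ x := by
      rw [map_mul, map_inv, app_σ_apply, app_δ_apply,
        mem_mooreChains_succ_iff.1 hfx j, map_one, inv_one, mul_one]
    rw [← hf_corr]
    exact ih (by omega)
      ⟨⟨_, mul_inv_σ_δ_mem_partialMooreChains (j := j) hx, rfl⟩, hf_corr.symm ▸ hfx⟩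

theorem mooreChains_le_map_of_surjective {q : ℕ}
    (hf : Function.Surjective (f.app (op ⦋q + 1⦌))) :
    MooreChains G' (q + 1) ≤ (MooreChains G (q + 1)).map (f.app (op ⦋q + 1⦌)).hom := by
  have := map_partialMooreChains_inf_le f (le_refl (q + 1))
  rwa [partialMooreChains_self_add_one, ← MonoidHom.range_eq_map,
    MonoidHom.range_eq_top.2 hf, top_inf_eq] at this

theorem partialMooreChains_le_range {q m : ℕ} (hm : m ≤ q + 1)
    (hf : Function.Surjective (f.app (op ⦋q⦌)))
    (hN : MooreChains G' (q + 1) ≤ (MooreChains G (q + 1)).map (f.app (op ⦋q + 1⦌)).hom) :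
    partialMooreChains G' q m ≤ (f.app (op ⦋q + 1⦌)).hom.range := by
  induction m with
  | zero =>
    rw [partialMooreChains_zero, MonoidHom.range_eq_map]
    exact hN.trans (Subgroup.map_mono le_top)
  | succ m ih =>
    intro x hx
    let j : Fin (q + 1) := ⟨m, hm⟩
    obtain ⟨y, hy⟩ := hf (G'.δ j.succ x)
    have hσδ : G'.σ j (G'.δ j.succ x) ∈ (f.app (op ⦋q + 1⦌)).hom.range :=
      ⟨G.σ j y, by rw [app_σ_apply, hy]⟩
    have hcorr := ih (by omega) (mul_inv_σ_δ_mem_partialMooreChains (j := j) hx)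
    simpa using Subgroup.mul_mem _ hcorr hσδ

theorem surjective_succ_of_mooreChains_le_map {q : ℕ}
    (hf : Function.Surjective (f.app (op ⦋q⦌)))
    (hN : MooreChains G' (q + 1) ≤ (MooreChains G (q + 1)).map (f.app (op ⦋q + 1⦌)).hom) :
    Function.Surjective (f.app (op ⦋q + 1⦌)) := by
  have := partialMooreChains_le_range f (le_refl (q + 1)) hf hN
  rwa [partialMooreChains_self_add_one, top_le_iff, MonoidHom.range_eq_top] at this

end

/-- A morphism `f : G → G'` of simplicial groups is levelwise surjective if and only if it
maps the Moore chain subgroup `N_q G` onto `N_q G'` for all `q`. -/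
theorem levelwise_surjective_iff_map_mooreChains
    (G G' : SimplicialObject GrpCat) (f : G ⟶ G') :
    (∀ q : ℕ, Function.Surjective (f.app (Opposite.op (SimplexCategory.mk q)))) ↔
      (∀ q : ℕ, Subgroup.map (f.app (Opposite.op (SimplexCategory.mk q))).hom
        (MooreChains G q) = MooreChains G' q) := by
  constructor
  · rintro hf (_ | q)
    · exact (map_mooreChains_zero_eq_iff f).2 (hf 0)
    · exact (map_mooreChains_le f _).antisymm (mooreChains_le_map_of_surjective f (hf _))
  · intro hN q
    induction q with
    | zero => exact (map_mooreChains_zero_eq_iff f).1 (hN 0)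
    | succ q ih => exact surjective_succ_of_mooreChains_le_map f ih (hN _).ge
end

section
/- Let ι : G' → G and p : G → G'' be homomorphisms of simplicial groups. For each q define the Moore chain subgroup N_q G = ⋂_{i=1}^{q} ker(d_i : G_q → G_{q-1}) (with N_0 G = G_0), and similarly for G' and G''. Then the sequence 1 → G' → G → G'' → 1 is short exact (i.e., for every q the map ι_q is injective, p_q is surjective, and the image of ι_q equals the kernel of p_q) if and only if the induced sequence of Moore chain groups 1 → N_q G' → N_q G → N_q G'' → 1 is short exact for every q (i.e., the restriction of ι_q to N_q G' is injective, p_q maps N_q G onto N_q G'', and ι_q(N_q G') equals N_q G ∩ ker(p_q)). -/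
open CategoryTheory

/-!
Moore chains are reached by a normalisation. Let `x ∈ G_{m+1}` have all faces `d_{k+1} x` in a
subgroup `K ≤ G_m`, and let `H ≤ G_{m+1}` satisfy `d_{k+1} H ≤ K` and `s_k K ≤ H`. Multiplying
the current element `y` on the left by `(s_k d_{k+1} y)⁻¹ ∈ H`, for `k = m, m - 1, …, 0`, kills
the faces `d_{k+1}` one at a time without reviving the higher ones, so `x ∈ H · N_{m+1}`.
Taking `H` to be `ker p`, `range ι`, `range p` or `ker (p ∘ ι)` transports surjectivity,
`p ∘ ι = 1` and exactness in the middle from level `m` and from the Moore chains up to level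
`m + 1`. Injectivity goes up because an element of `ker ι_{m+1}` has its faces in
`ker ι_m = 1`, so it is a Moore chain.
-/

open Opposite Simplicial

section

variable {X Y Z : SimplicialObject GrpCat}

lemma δ_naturality_apply (f : X ⟶ Y) {n : ℕ} (i : Fin (n + 2)) (x : X.obj (op ⦋n + 1⦌)) :
    f.app (op ⦋n⦌) (X.δ i x) = Y.δ i (f.app (op ⦋n + 1⦌) x) :=
  NatTrans.naturality_apply f _ x

lemma σ_naturality_apply (f : X ⟶ Y) {n : ℕ} (i : Fin (n + 1)) (x : X.obj (op ⦋n⦌)) :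
    f.app (op ⦋n + 1⦌) (X.σ i x) = Y.σ i (f.app (op ⦋n⦌) x) :=
  NatTrans.naturality_apply f _ x

lemma map_δ_range_le (f : X ⟶ Y) {n : ℕ} (i : Fin (n + 2)) :
    (f.app (op ⦋n + 1⦌)).hom.range.map (Y.δ i).hom ≤ (f.app (op ⦋n⦌)).hom.range := by
  rintro _ ⟨_, ⟨x, rfl⟩, rfl⟩
  exact ⟨X.δ i x, δ_naturality_apply f i x⟩

lemma map_σ_range_le (f : X ⟶ Y) {n : ℕ} (i : Fin (n + 1)) :
    (f.app (op ⦋n⦌)).hom.range.map (Y.σ i).hom ≤ (f.app (op ⦋n + 1⦌)).hom.range := by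
  rintro _ ⟨_, ⟨x, rfl⟩, rfl⟩
  exact ⟨X.σ i x, σ_naturality_apply f i x⟩

lemma map_δ_ker_le (f : X ⟶ Y) {n : ℕ} (i : Fin (n + 2)) :
    (f.app (op ⦋n + 1⦌)).hom.ker.map (X.δ i).hom ≤ (f.app (op ⦋n⦌)).hom.ker := by
  rintro _ ⟨x, hx : f.app _ x = 1, rfl⟩
  exact (δ_naturality_apply f i x).trans (by rw [hx, map_one])

lemma map_σ_ker_le (f : X ⟶ Y) {n : ℕ} (i : Fin (n + 1)) :
    (f.app (op ⦋n⦌)).hom.ker.map (X.σ i).hom ≤ (f.app (op ⦋n + 1⦌)).hom.ker := by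
  rintro _ ⟨x, hx : f.app _ x = 1, rfl⟩
  exact (σ_naturality_apply f i x).trans (by rw [hx, map_one])

lemma MooreChains.mem_succ_iff {m : ℕ} {x : X.obj (op ⦋m + 1⦌)} :
    x ∈ MooreChains X (m + 1) ↔ ∀ j : Fin (m + 1), X.δ j.succ x = 1 := by
  simp [MooreChains, Subgroup.mem_iInf, MonoidHom.mem_ker]

lemma MooreChains.map_le (f : X ⟶ Y) (q : ℕ) :
    (MooreChains X q).map (f.app (op ⦋q⦌)).hom ≤ MooreChains Y q := by
  cases q with
  | zero => exact le_top
  | succ m =>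
    rintro _ ⟨x, hx : x ∈ MooreChains X (m + 1), rfl⟩
    rw [mem_succ_iff] at hx ⊢
    intro j
    rw [← δ_naturality_apply, hx, map_one]

lemma MooreChains.mem_of_app_mem (f : X ⟶ Y) {m : ℕ} (hf : Function.Injective (f.app (op ⦋m⦌)))
    {x : X.obj (op ⦋m + 1⦌)} (hx : f.app _ x ∈ MooreChains Y (m + 1)) :
    x ∈ MooreChains X (m + 1) := by
  rw [mem_succ_iff] at hx ⊢
  intro j
  apply hf
  rw [δ_naturality_apply, hx j, map_one]

lemma δ_succ_inv_σ_δ_succ_mul_eq_one {m : ℕ} {k : Fin (m + 1)} {w : X.obj (op ⦋m + 1⦌)}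
    (hw : ∀ j : Fin (m + 1), k < j → X.δ j.succ w = 1) (j : Fin (m + 1)) (hkj : k ≤ j) :
    X.δ j.succ ((X.σ k (X.δ k.succ w))⁻¹ * w) = 1 := by
  rw [map_mul, map_inv]
  rcases hkj.eq_or_lt with rfl | hlt
  · have hδσ := ConcreteCategory.congr_hom (X.δ_comp_σ_succ (i := k)) (X.δ k.succ w)
    simp only [ConcreteCategory.comp_apply, ConcreteCategory.id_apply] at hδσ
    rw [hδσ, inv_mul_cancel]
  rw [hw j hlt, mul_one]
  cases m with
  | zero => exact absurd hlt (by omega)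
  | succ n =>
    obtain ⟨k, rfl⟩ := Fin.exists_castSucc_eq.mpr (Fin.ne_last_of_lt hlt)
    have hδσ := ConcreteCategory.congr_hom (X.δ_comp_σ_of_gt hlt) (X.δ k.castSucc.succ w)
    have hδδ := ConcreteCategory.congr_hom
      (X.δ_comp_δ (Fin.castSucc_lt_iff_succ_le.mp hlt)) w
    simp only [ConcreteCategory.comp_apply, Fin.succ_castSucc] at hδσ hδδ ⊢
    rw [hδσ, ← hδδ, hw j hlt, map_one, map_one, inv_one]

lemma MooreChains.exists_mem_inv_mul_mem {m : ℕ}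
    (H : Subgroup (X.obj (op ⦋m + 1⦌))) (K : Subgroup (X.obj (op ⦋m⦌)))
    (hδ : ∀ k : Fin (m + 1), H.map (X.δ k.succ).hom ≤ K)
    (hσ : ∀ k : Fin (m + 1), K.map (X.σ k).hom ≤ H)
    {x : X.obj (op ⦋m + 1⦌)} (hx : ∀ k : Fin (m + 1), X.δ k.succ x ∈ K) :
    ∃ c ∈ H, c⁻¹ * x ∈ MooreChains X (m + 1) := by
  suffices h : ∀ n ≤ m + 1, ∃ c ∈ H, ∀ j : Fin (m + 1), n ≤ (j : ℕ) →
      X.δ j.succ (c⁻¹ * x) = 1 by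
    obtain ⟨c, hc, hfaces⟩ := h 0 (Nat.zero_le _)
    exact ⟨c, hc, mem_succ_iff.mpr fun j => hfaces j (Nat.zero_le _)⟩
  intro n hn
  induction hn using Nat.decreasingInduction with
  | self => exact ⟨1, one_mem H, fun j hj => absurd j.isLt (by omega)⟩
  | of_succ n hn ih =>
    obtain ⟨c, hc, hfaces⟩ := ih
    set k : Fin (m + 1) := ⟨n, hn⟩
    have hw : X.δ k.succ (c⁻¹ * x) ∈ K := by
      rw [map_mul, map_inv]
      exact mul_mem (inv_mem (hδ k ⟨c, hc, rfl⟩)) (hx k)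
    refine ⟨c * X.σ k (X.δ k.succ (c⁻¹ * x)), mul_mem hc (hσ k ⟨_, hw, rfl⟩), fun j hj => ?_⟩
    rw [mul_inv_rev, mul_assoc]
    exact δ_succ_inv_σ_δ_succ_mul_eq_one hfaces j hj

lemma MooreChains.eq_top_of_le {m : ℕ} (H : Subgroup (X.obj (op ⦋m + 1⦌)))
    (hσ : ∀ k : Fin (m + 1), (X.σ k).hom.range ≤ H) (hN : MooreChains X (m + 1) ≤ H) :
    H = ⊤ := by
  refine eq_top_iff.mpr fun x _ => ?_
  obtain ⟨c, hc, hcx⟩ := exists_mem_inv_mul_mem H ⊤ (fun _ => le_top)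
    (fun k => by rw [← MonoidHom.range_eq_map]; exact hσ k) (fun _ => Subgroup.mem_top _)
  simpa using mul_mem hc (hN hcx)

lemma MooreChains.map_eq_of_surjective (f : X ⟶ Y) (q : ℕ)
    (hf : Function.Surjective (f.app (op ⦋q⦌))) :
    (MooreChains X q).map (f.app (op ⦋q⦌)).hom = MooreChains Y q := by
  refine (map_le f q).antisymm ?_
  cases q with
  | zero => exact (Subgroup.map_top_of_surjective _ hf).ge
  | succ m =>
    intro y hy
    obtain ⟨x, rfl⟩ := hf y
    have hδ (k : Fin (m + 1)) : X.δ k.succ x ∈ (f.app (op ⦋m⦌)).hom.ker := by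
      rw [MonoidHom.mem_ker, δ_naturality_apply, mem_succ_iff.mp hy k]
    obtain ⟨c, hc, hcx⟩ := exists_mem_inv_mul_mem _ _ (fun k => map_δ_ker_le f k.succ)
      (map_σ_ker_le f) hδ
    refine ⟨c⁻¹ * x, hcx, ?_⟩
    rw [map_mul, map_inv, MonoidHom.mem_ker.mp hc, inv_one, one_mul]

lemma MooreChains.map_eq_inf_range (f : X ⟶ Y) (q : ℕ)
    (hf : ∀ n : ℕ, Function.Injective (f.app (op ⦋n⦌))) :
    (MooreChains X q).map (f.app (op ⦋q⦌)).hom =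
      MooreChains Y q ⊓ (f.app (op ⦋q⦌)).hom.range := by
  refine le_antisymm (le_inf (map_le f q) (Subgroup.map_le_range _ _)) ?_
  cases q with
  | zero => simp [MooreChains, MonoidHom.range_eq_map]
  | succ m =>
    rintro _ ⟨hy, x, rfl⟩
    exact ⟨x, mem_of_app_mem f (hf m) hy, rfl⟩

lemma injective_app_succ_of_injOn (f : X ⟶ Y) {m : ℕ}
    (hm : Function.Injective (f.app (op ⦋m⦌)))
    (hN : Set.InjOn (f.app (op ⦋m + 1⦌)) (MooreChains X (m + 1) : Set _)) :
    Function.Injective (f.app (op ⦋m + 1⦌)) := by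
  refine (injective_iff_map_eq_one _).mpr fun x hx => ?_
  have hxN : x ∈ MooreChains X (m + 1) :=
    MooreChains.mem_of_app_mem f hm (hx ▸ one_mem _)
  exact hN hxN (one_mem _) (hx.trans (map_one _).symm)

lemma surjective_app_succ_of_le_range (f : X ⟶ Y) {m : ℕ}
    (hm : Function.Surjective (f.app (op ⦋m⦌)))
    (hN : MooreChains Y (m + 1) ≤ (f.app (op ⦋m + 1⦌)).hom.range) :
    Function.Surjective (f.app (op ⦋m + 1⦌)) := by
  refine MonoidHom.range_eq_top.mp (MooreChains.eq_top_of_le _ (fun k => ?_) hN)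
  rw [MonoidHom.range_eq_map, ← MonoidHom.range_eq_top.mpr hm]
  exact map_σ_range_le f k

lemma range_app_succ_le_ker (ι : X ⟶ Y) (p : Y ⟶ Z) {m : ℕ}
    (hm : (ι.app (op ⦋m⦌)).hom.range ≤ (p.app (op ⦋m⦌)).hom.ker)
    (hN : (MooreChains X (m + 1)).map (ι.app (op ⦋m + 1⦌)).hom ≤
      (p.app (op ⦋m + 1⦌)).hom.ker) :
    (ι.app (op ⦋m + 1⦌)).hom.range ≤ (p.app (op ⦋m + 1⦌)).hom.ker := by
  rw [MonoidHom.range_le_ker_iff, ← MonoidHom.ker_eq_top_iff]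
  refine MooreChains.eq_top_of_le _ (fun k => ?_) ?_
  · rintro _ ⟨x, rfl⟩
    rw [MonoidHom.mem_ker, MonoidHom.comp_apply, σ_naturality_apply, σ_naturality_apply,
      MonoidHom.mem_ker.mp (hm ⟨x, rfl⟩), map_one]
  · rwa [← MonoidHom.comap_ker, ← Subgroup.map_le_iff_le_comap]

lemma range_app_succ_eq_ker (ι : X ⟶ Y) (p : Y ⟶ Z) {m : ℕ}
    (hm : (ι.app (op ⦋m⦌)).hom.range = (p.app (op ⦋m⦌)).hom.ker)
    (hle : (ι.app (op ⦋m + 1⦌)).hom.range ≤ (p.app (op ⦋m + 1⦌)).hom.ker)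
    (hN : MooreChains Y (m + 1) ⊓ (p.app (op ⦋m + 1⦌)).hom.ker ≤
      (MooreChains X (m + 1)).map (ι.app (op ⦋m + 1⦌)).hom) :
    (ι.app (op ⦋m + 1⦌)).hom.range = (p.app (op ⦋m + 1⦌)).hom.ker := by
  refine hle.antisymm fun y hy => ?_
  have hδ (k : Fin (m + 1)) : Y.δ k.succ y ∈ (ι.app (op ⦋m⦌)).hom.range := by
    rw [hm, MonoidHom.mem_ker, δ_naturality_apply, MonoidHom.mem_ker.mp hy, map_one]
  obtain ⟨c, hc, hcy⟩ :=
    MooreChains.exists_mem_inv_mul_mem _ _ (fun k => map_δ_range_le ι k.succ)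
      (map_σ_range_le ι) hδ
  have hcy' : c⁻¹ * y ∈ (ι.app (op ⦋m + 1⦌)).hom.range :=
    Subgroup.map_le_range _ _ (hN (Subgroup.mem_inf.mpr ⟨hcy, mul_mem (inv_mem (hle hc)) hy⟩))
  simpa using mul_mem hc hcy'

end

/-- A sequence `1 → G' → G → G'' → 1` of simplicial groups is short exact (levelwise) if and
only if the induced sequence of Moore chain groups `1 → N_q G' → N_q G → N_q G'' → 1` is short
exact for every `q`. -/
theorem levelwise_exact_iff_mooreChains_exact
    (G' G G'' : SimplicialObject GrpCat) (ι : G' ⟶ G) (p : G ⟶ G'') :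
    (∀ q : ℕ,
        Function.Injective (ι.app (Opposite.op (SimplexCategory.mk q))) ∧
        Function.Surjective (p.app (Opposite.op (SimplexCategory.mk q))) ∧
        MonoidHom.range (ι.app (Opposite.op (SimplexCategory.mk q))).hom =
          MonoidHom.ker (p.app (Opposite.op (SimplexCategory.mk q))).hom) ↔
      (∀ q : ℕ,
        Set.InjOn (ι.app (Opposite.op (SimplexCategory.mk q))) (MooreChains G' q : Set _) ∧
        Subgroup.map (p.app (Opposite.op (SimplexCategory.mk q))).hom (MooreChains G q) =
          MooreChains G'' q ∧
        Subgroup.map (ι.app (Opposite.op (SimplexCategory.mk q))).hom (MooreChains G' q) =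
          MooreChains G q ⊓
            MonoidHom.ker (p.app (Opposite.op (SimplexCategory.mk q))).hom) := by
  constructor
  · intro h q
    obtain ⟨hinj, hsurj, hex⟩ := h q
    exact ⟨hinj.injOn, MooreChains.map_eq_of_surjective p q hsurj,
      by rw [MooreChains.map_eq_inf_range ι q fun n => (h n).1, hex]⟩
  · intro h q
    induction q with
    | zero =>
      obtain ⟨hinj, hsurj, hex⟩ := h 0
      simp only [MooreChains, Subgroup.coe_top, Set.injOn_univ, ← MonoidHom.range_eq_map,
        MonoidHom.range_eq_top, top_inf_eq] at hinj hsurj hex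
      exact ⟨hinj, hsurj, hex⟩
    | succ m ih =>
      obtain ⟨hinj, hsurj, hex⟩ := ih
      obtain ⟨hinjN, hsurjN, hexN⟩ := h (m + 1)
      have hle := range_app_succ_le_ker ι p hex.le (hexN ▸ inf_le_right)
      exact ⟨injective_app_succ_of_injOn ι hinj hinjN,
        surjective_app_succ_of_le_range p hsurj (hsurjN.ge.trans (Subgroup.map_le_range _ _)),
        range_app_succ_eq_ker ι p hex hle hexN.ge⟩
end
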